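/- arXiv:1711.02917 — 4 statements merged into one kernel-verified Lean document; each statement's English description precedes it below -/
import Mathlib

section
/- Let n ≥ 4 be even and k = 2^(n-1) + 2^(n/2-1). Suppose λ, μ are integers with 1 ≤ μ < k, λ - μ = (2w+1)·2^(n/2) for some integer w, and Δ := (λ-μ)² + 4(k-μ) = 2^(2m) for some positive integer m. Then a contradiction follows; i.e., no such λ, μ, m, w exist. -/
/-- Arithmetic core of the nonexistence proof, case `k = 2^(n-1) + 2^(n/2-1)`:
no integers `λ, μ, w` and positive `m` satisfy the listed conditions. -/
theorem stmt_12 (n : ℕ) (hn4 : 4 ≤ n) (hne : Even n) (lam mu w : ℤ) (m : ℕ) (hm : 0 < m)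
    (k : ℤ) (hk : k = 2 ^ (n - 1) + 2 ^ (n / 2 - 1))
    (hmu1 : 1 ≤ mu) (hmuk : mu < k)
    (hlm : lam - mu = (2 * w + 1) * 2 ^ (n / 2))
    (hDelta : (lam - mu) ^ 2 + 4 * (k - mu) = 2 ^ (2 * m)) :
    False := by
  obtain ⟨t, ht⟩ := hne
  obtain ⟨s, rfl⟩ : ∃ s, t = s + 2 := ⟨t - 2, by omega⟩
  subst ht
  rw [show (s + 2) + (s + 2) - 1 = 2 * s + 3 by omega,
      show ((s + 2) + (s + 2)) / 2 - 1 = s + 1 by omega] at hk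
  rw [show ((s + 2) + (s + 2)) / 2 = s + 2 by omega] at hlm
  set Q : ℤ := 2 ^ (s + 1) with hQ
  have hQ2 : (2 : ℤ) ≤ Q := by
    calc (2:ℤ) = 2 ^ 1 := by norm_num
    _ ≤ 2 ^ (s + 1) := by
        apply pow_le_pow_right₀ (by norm_num) (by omega)
  have hk' : k = 2 * Q * Q + Q := by
    rw [hk, hQ, show 2 * s + 3 = (s + 1) + (s + 1) + 1 by ring, pow_add, pow_add, pow_one]
    ring
  have hlm2 : lam - mu = (2 * w + 1) * (2 * Q) := by
    rw [hlm, hQ, show s + 2 = (s + 1) + 1 by ring, pow_add, pow_one]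
    ring
  rw [hlm2] at hDelta
  -- Step 1: 2*(s+2+2) ≤ 2*m, i.e. m ≥ s+3
  have h1 : (2 : ℤ) ^ (2 * s + 4) < 2 ^ (2 * m) := by
    have hP : (2:ℤ) ^ (2 * s + 4) = 4 * Q * Q := by
      rw [hQ, show 2 * s + 4 = (s + 1) + (s + 1) + 2 by ring, pow_add, pow_add]
      ring
    rw [hP, ← hDelta]
    have hww : (0:ℤ) ≤ w ^ 2 + w := by nlinarith [sq_nonneg (2 * w + 1)]
    nlinarith [mul_nonneg (sq_nonneg Q) hww, hmuk, hmu1, hQ2]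
  have h2 : 2 * s + 4 < 2 * m := by
    exact (pow_lt_pow_iff_right₀ (by norm_num : (1:ℤ) < 2)).mp h1
  obtain ⟨r, rfl⟩ : ∃ r, m = s + 3 + r := ⟨m - (s + 3), by omega⟩
  obtain ⟨A, hA⟩ : ∃ A : ℤ, A = 4 ^ r := ⟨_, rfl⟩
  have hA1 : 1 ≤ A := by rw [hA]; exact one_le_pow₀ (by norm_num)
  have hpow : (2 : ℤ) ^ (2 * (s + 3 + r)) = 16 * Q ^ 2 * A := by
    rw [hA, hQ, show 2 * (s + 3 + r) = ((s + 1) + (s + 1) + 4) + 2 * r by ring,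
        pow_add, pow_add, pow_add, pow_mul]
    ring
  rw [hpow] at hDelta
  obtain ⟨u, hu⟩ : ∃ u : ℤ, u = w ^ 2 := ⟨_, rfl⟩
  have key : 4 * ((4 * A - 4 * u - 4 * w - 1) * Q ^ 2) = 4 * (k - mu) := by
    rw [hu]
    linear_combination -hDelta
  have hub : k - mu < 3 * Q ^ 2 := by nlinarith [hk', hmu1, hQ2]
  have hlb : 1 ≤ k - mu := by omega
  have hQpos : 0 < Q ^ 2 := by positivity
  have hc1 : 1 ≤ 4 * A - 4 * u - 4 * w - 1 := by nlinarith [key, hlb, hQpos]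
  have hc2 : 4 * A - 4 * u - 4 * w - 1 ≤ 2 := by nlinarith [key, hub, hQpos]
  omega
end

section
/- Let n ≥ 4 be even and k = 2^(n-1) - 2^(n/2-1). Suppose λ, μ are integers with 1 ≤ μ < k, λ - μ = (2w+1)·2^(n/2) for some integer w, and Δ := (λ-μ)² + 4(k-μ) = 2^(2m) for some positive integer m. Then a contradiction follows; i.e., no such λ, μ, m, w exist. -/
/-- Arithmetic core of the nonexistence proof, case `k = 2^(n-1) - 2^(n/2-1)`:
no integers `λ, μ, w` and positive `m` satisfy the listed conditions. -/
theorem stmt_13 (n : ℕ) (hn4 : 4 ≤ n) (hne : Even n) (lam mu w : ℤ) (m : ℕ) (hm : 0 < m)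
    (k : ℤ) (hk : k = 2 ^ (n - 1) - 2 ^ (n / 2 - 1))
    (hmu1 : 1 ≤ mu) (hmuk : mu < k)
    (hlm : lam - mu = (2 * w + 1) * 2 ^ (n / 2))
    (hDelta : (lam - mu) ^ 2 + 4 * (k - mu) = 2 ^ (2 * m)) :
    False := by
  obtain ⟨h, rfl⟩ := hne
  have hh2 : 2 ≤ h := by omega
  have hdiv : (h + h) / 2 = h := by omega
  rw [hdiv] at hk hlm
  -- power identities
  have e1 : (2:ℤ)^(h+h) = 2 * 2^(h+h-1) := by
    rw [← pow_succ']; congr 1; omega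
  have e2 : (2:ℤ)^h = 2 * 2^(h-1) := by
    rw [← pow_succ']; congr 1; omega
  have e3 : (2:ℤ)^(h+h) = 2^h * 2^h := pow_add 2 h h
  have hp : (0:ℤ) < 2^h := by positivity
  have hP : (0:ℤ) < 2^(h+h) := by positivity
  -- rewrite Delta
  set a : ℤ := 2*w + 1 with ha
  have hsq : (lam - mu)^2 = a^2 * 2^(h+h) := by
    rw [hlm, mul_pow, e3]; ring
  rw [hsq] at hDelta
  have ha1 : 1 ≤ a^2 := by
    rcases le_or_gt 0 w with hw | hw
    · nlinarith
    · nlinarith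
  -- A := 4(k - mu)
  have hApos : 0 < 4 * (k - mu) := by linarith
  have hAlt : 4 * (k - mu) < 2 * 2^(h+h) := by
    rw [hk]; nlinarith
  -- 2m > h+h
  have hmn : h + h < 2 * m := by
    by_contra hc
    push_neg at hc
    have : (2:ℤ)^(2*m) ≤ 2^(h+h) := pow_le_pow_right₀ (by norm_num) hc
    nlinarith
  have hmn2 : h + h + 2 ≤ 2 * m := by omega
  -- divisibility
  have hdvd : (2:ℤ)^(h+h) ∣ 4 * (k - mu) := by
    have h1 : (2:ℤ)^(h+h) ∣ 2^(2*m) := pow_dvd_pow 2 (by omega)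
    have h2 : (2:ℤ)^(h+h) ∣ a^2 * 2^(h+h) := dvd_mul_left _ _
    have : 4 * (k - mu) = 2^(2*m) - a^2 * 2^(h+h) := by linarith
    rw [this]; exact dvd_sub h1 h2
  obtain ⟨c, hc⟩ := hdvd
  have hc1 : c = 1 := by
    have h1 : 0 < c := by
      by_contra hc0
      push_neg at hc0
      have : (2:ℤ)^(h+h) * c ≤ 0 := mul_nonpos_of_nonneg_of_nonpos hP.le hc0
      linarith
    have h2 : c < 2 := by
      by_contra hc2
      push_neg at hc2
      have : (2:ℤ)^(h+h) * 2 ≤ (2:ℤ)^(h+h) * c := mul_le_mul_of_nonneg_left hc2 hP.le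
      linarith
    omega
  rw [hc1, mul_one] at hc
  rw [hc] at hDelta
  -- now (a^2 + 1) * 2^(h+h) = 2^(2m) = 2^(h+h) * 2^(2m-(h+h))
  have hj : (2:ℤ)^(2*m) = 2^(h+h) * (4 * 2^(2*m - (h+h) - 2)) := by
    rw [show (4:ℤ) = 2^2 by norm_num, ← pow_add, ← pow_add]
    congr 1; omega
  rw [hj] at hDelta
  have key : a^2 + 1 = 4 * 2^(2*m - (h+h) - 2) := by
    have := mul_right_cancel₀ (ne_of_gt hP) (by linarith [hDelta] : (a^2 + 1) * 2^(h+h) = (4 * 2^(2*m - (h+h) - 2)) * 2^(h+h))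
    exact this
  have expand : 4 * (w^2 + w) + 2 = 4 * 2^(2*m - (h+h) - 2) := by
    rw [← key, ha]; ring
  have hppos : (0:ℤ) < 2^(2*m - (h+h) - 2) := by positivity
  set s := w^2 + w
  set t := (2:ℤ)^(2*m - (h+h) - 2)
  omega
end

section
/- Let n ≥ 4 be even, q : 𝔽₂ⁿ → 𝔽₂ balanced and non-affine, and f : 𝔽₂ⁿ → 𝔽₂ with wt(f) even. Assuming that no q-bent functions exist (|W_q(f')(A)| = 2^(n/2) for all A cannot hold for any f'), f is not 3-almost q-bent; i.e., there is A ∈ GL_n(𝔽₂) ∪ {0} with | |W_q(f)(A)| - 2^(n/2) | > 3. -/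
open Finset

/-- The weight of a Boolean function: the size of its support. -/
def wt {n : ℕ} (f : (Fin n → ZMod 2) → ZMod 2) : ℕ :=
  (Finset.univ.filter (fun a : Fin n → ZMod 2 => f a = 1)).card

/-- `q` is balanced if its weight is `2^(n-1)`. -/
def IsBalanced {n : ℕ} (q : (Fin n → ZMod 2) → ZMod 2) : Prop :=
  wt q = 2 ^ (n - 1)

/-- `q` is affine if `q(x) = v·x + c` for some `v` and `c`. -/
def IsAffine {n : ℕ} (q : (Fin n → ZMod 2) → ZMod 2) : Prop :=
  ∃ (v : Fin n → ZMod 2) (c : ZMod 2), ∀ x, q x = (∑ i, v i * x i) + c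

/-- The `q`-transform coefficient `W_q(f)(A)`, with `W_q(f)(0)` defined as the imbalance. -/
def Wq {n : ℕ} (q f : (Fin n → ZMod 2) → ZMod 2) (A : Matrix (Fin n) (Fin n) (ZMod 2)) : ℤ :=
  if A = 0 then ∑ a : Fin n → ZMod 2, (-1 : ℤ) ^ (f a).val
  else ∑ a : Fin n → ZMod 2, (-1 : ℤ) ^ (f a + q (Matrix.vecMul a A)).val

/-- `f` is `q`-bent: `|W_q(f)(A)| = 2^(n/2)` for all `A ∈ GL_n(𝔽₂) ∪ {0}`. -/
def QBent {n : ℕ} (q f : (Fin n → ZMod 2) → ZMod 2) : Prop :=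
  ∀ A : Matrix (Fin n) (Fin n) (ZMod 2), (IsUnit A ∨ A = 0) → |Wq q f A| = 2 ^ (n / 2)

/-- `f` is `δ`-almost `q`-bent: `||W_q(f)(A)| - 2^(n/2)| ≤ δ` for all `A ∈ GL_n(𝔽₂) ∪ {0}`. -/
def AlmostQBent {n : ℕ} (q f : (Fin n → ZMod 2) → ZMod 2) (δ : ℤ) : Prop :=
  ∀ A : Matrix (Fin n) (Fin n) (ZMod 2), (IsUnit A ∨ A = 0) →
    |(|Wq q f A| - 2 ^ (n / 2))| ≤ δ

lemma sum_sign {n : ℕ} (h : (Fin n → ZMod 2) → ZMod 2) :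
    ∑ a : Fin n → ZMod 2, (-1 : ℤ) ^ (h a).val = 2 ^ n - 2 * wt h := by
  have hcard : Fintype.card (Fin n → ZMod 2) = 2 ^ n := by
    simp [Fintype.card_fun]
  have hsplit := Finset.sum_filter_add_sum_filter_not Finset.univ
    (fun a : Fin n → ZMod 2 => h a = 1) (fun a => (-1 : ℤ) ^ (h a).val)
  have hc := Finset.card_filter_add_card_filter_not
    (s := (Finset.univ : Finset (Fin n → ZMod 2))) (p := fun a => h a = 1)
  simp only [Finset.card_univ, hcard] at hc
  have hwt : (Finset.univ.filter (fun a : Fin n → ZMod 2 => h a = 1)).card = wt h := rfl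
  have h1 : ∑ a ∈ Finset.univ.filter (fun a : Fin n → ZMod 2 => h a = 1),
      (-1 : ℤ) ^ (h a).val = -(wt h : ℤ) := by
    have key : ∀ a ∈ Finset.univ.filter (fun a : Fin n → ZMod 2 => h a = 1),
        (-1 : ℤ) ^ (h a).val = -1 := by
      intro a ha; rw [(Finset.mem_filter.mp ha).2]; rfl
    rw [Finset.sum_congr rfl key, Finset.sum_const, hwt]
    simp
  have h0 : ∑ a ∈ Finset.univ.filter (fun a : Fin n → ZMod 2 => ¬ h a = 1),
      (-1 : ℤ) ^ (h a).val = ((2 ^ n - wt h : ℕ) : ℤ) := by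
    have key : ∀ a ∈ Finset.univ.filter (fun a : Fin n → ZMod 2 => ¬ h a = 1),
        (-1 : ℤ) ^ (h a).val = 1 := by
      intro a ha
      have h2 := (Finset.mem_filter.mp ha).2
      have hz : ∀ x : ZMod 2, ¬ x = 1 → x = 0 := by decide
      rw [hz _ h2]; rfl
    rw [Finset.sum_congr rfl key, Finset.sum_const]
    have : (Finset.univ.filter (fun a : Fin n → ZMod 2 => ¬ h a = 1)).card
        = 2 ^ n - wt h := by omega
    rw [this]; simp
  rw [← hsplit, h1, h0]
  have hle : wt h ≤ 2 ^ n := by omega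
  push_cast [Nat.cast_sub hle]
  ring

lemma wt_cast {n : ℕ} (h : (Fin n → ZMod 2) → ZMod 2) :
    ((wt h : ZMod 2)) = ∑ a : Fin n → ZMod 2, h a := by
  rw [wt]
  rw [← Finset.sum_filter_add_sum_filter_not Finset.univ (fun a => h a = 1)]
  have key : ∀ a ∈ Finset.univ.filter (fun a : Fin n → ZMod 2 => h a = 1), h a = 1 :=
    fun a ha => (Finset.mem_filter.mp ha).2
  have key0 : ∀ a ∈ Finset.univ.filter (fun a : Fin n → ZMod 2 => ¬ h a = 1), h a = 0 := by
    intro a ha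
    have hz : ∀ x : ZMod 2, ¬ x = 1 → x = 0 := by decide
    exact hz _ (Finset.mem_filter.mp ha).2
  rw [Finset.sum_congr rfl key, Finset.sum_congr rfl key0, Finset.sum_const, Finset.sum_const]
  simp

lemma reindex_sum {n : ℕ} (A : Matrix (Fin n) (Fin n) (ZMod 2)) (hA : IsUnit A)
    (q : (Fin n → ZMod 2) → ZMod 2) :
    ∑ a : Fin n → ZMod 2, q (Matrix.vecMul a A) = ∑ b : Fin n → ZMod 2, q b := by
  apply Fintype.sum_bijective (fun a : Fin n → ZMod 2 => Matrix.vecMul a A) ?_ _ _ (fun a => rfl)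
  have hdet : IsUnit A.det := (Matrix.isUnit_iff_isUnit_det A).mp hA
  have h1 : A * A⁻¹ = 1 := Matrix.mul_nonsing_inv _ hdet
  have h2 : A⁻¹ * A = 1 := Matrix.nonsing_inv_mul _ hdet
  constructor
  · intro a b hab
    have := congrArg (fun v => Matrix.vecMul v A⁻¹) hab
    simpa [Matrix.vecMul_vecMul, h1] using this
  · intro b
    exact ⟨Matrix.vecMul b A⁻¹, by simp [Matrix.vecMul_vecMul, h2]⟩

/-- Key lemma: `4 ∣ W_q(f)(A)` when `wt f` is even and `q` is balanced. -/
lemma four_dvd_Wq {n : ℕ} (hn4 : 4 ≤ n) (q f : (Fin n → ZMod 2) → ZMod 2)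
    (hq : IsBalanced q) (hf : Even (wt f))
    (A : Matrix (Fin n) (Fin n) (ZMod 2)) (hA : IsUnit A ∨ A = 0) :
    (4 : ℤ) ∣ Wq q f A := by
  have h2n : (4 : ℤ) ∣ 2 ^ n := by
    have : (2:ℤ) ^ n = 4 * 2 ^ (n - 2) := by
      rw [show (4:ℤ) = 2^2 by norm_num, ← pow_add]
      congr 1; omega
    rw [this]; exact Dvd.intro _ rfl
  by_cases h0 : A = 0
  · rw [Wq, if_pos h0, sum_sign]
    obtain ⟨k, hk⟩ := hf
    rw [hk]
    push_cast
    omega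
  · have hAu : IsUnit A := hA.resolve_right h0
    rw [Wq, if_neg h0]
    have := sum_sign (fun a => f a + q (Matrix.vecMul a A))
    rw [this]
    have heven : Even (wt (fun a => f a + q (Matrix.vecMul a A))) := by
      have hcast : ((wt (fun a => f a + q (Matrix.vecMul a A)) : ZMod 2)) = 0 := by
        rw [wt_cast, Finset.sum_add_distrib, ← wt_cast, reindex_sum A hAu, ← wt_cast]
        obtain ⟨k, hk⟩ := hf
        rw [hk, hq]
        have h1 : ((k + k : ℕ) : ZMod 2) = 0 := by
          push_cast; ring_nf
          rw [show ((2:ZMod 2)) = 0 from rfl]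
          ring
        have h2 : ((2 ^ (n - 1) : ℕ) : ZMod 2) = 0 := by
          have : (2:ℕ) ^ (n-1) = 2 * 2 ^ (n-2) := by
            rw [← pow_succ']
            congr 1; omega
          rw [this]; push_cast
          rw [show ((2:ZMod 2)) = 0 from rfl]
          ring
        rw [h1, h2, add_zero]
      have := (ZMod.natCast_eq_zero_iff _ 2).mp hcast
      exact (even_iff_two_dvd).mpr this
    obtain ⟨k, hk⟩ := heven
    rw [hk]
    push_cast
    omega

/-- Let `n ≥ 4` be even, `q` balanced and non-affine, `wt f` even. If no `q`-bent function
exists, then `f` is not `3`-almost `q`-bent: some `A ∈ GL_n(𝔽₂) ∪ {0}` has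
`||W_q(f)(A)| - 2^(n/2)| > 3`. -/
theorem stmt_18 (n : ℕ) (hn4 : 4 ≤ n) (hne : Even n) (q f : (Fin n → ZMod 2) → ZMod 2)
    (hq : IsBalanced q) (hqa : ¬ IsAffine q) (hf : Even (wt f))
    (hnobent : ∀ f' : (Fin n → ZMod 2) → ZMod 2, ¬ QBent q f') :
    ∃ A : Matrix (Fin n) (Fin n) (ZMod 2), (IsUnit A ∨ A = 0) ∧
      3 < |(|Wq q f A| - 2 ^ (n / 2))| := by
  by_contra hcon
  push_neg at hcon
  apply hnobent f
  intro A hA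
  have hdvd : (4 : ℤ) ∣ Wq q f A := four_dvd_Wq hn4 q f hq hf A hA
  have hdvdabs : (4 : ℤ) ∣ |Wq q f A| := (dvd_abs _ _).mpr hdvd
  have hdvd2 : (4 : ℤ) ∣ 2 ^ (n / 2) := by
    have : (2:ℤ) ^ (n/2) = 4 * 2 ^ (n/2 - 2) := by
      rw [show (4:ℤ) = 2^2 by norm_num, ← pow_add]
      congr 1; omega
    rw [this]; exact Dvd.intro _ rfl
  have h3 := hcon A hA
  rw [abs_le] at h3
  omega
end

section
/- Let n ≥ 3 be odd, ω = ⌊2^(n/2)⌋ with ω ≡ 0 (mod 4), and q : 𝔽₂ⁿ → 𝔽₂ balanced. Then no f : 𝔽₂ⁿ → 𝔽₂ with wt(f) even is 3-almost q-bent. -/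
/-!
Every coefficient `W_q(f)(A)` with `A ∈ GL_n(𝔽₂) ∪ {0}` is `2^n - 2·wt(g)` for `g = f` or
`g = f + q ∘ A`, and both weights are even (`q ∘ A` has the weight `2^(n-1)` of `q`); so the
coefficient is divisible by 4. The only multiple of 4 within distance 3 of `√(2^n)` is `ω`, hence
an almost bent `f` would have `|W_q(f)(A)| = ω` throughout.

On the other hand `GL_n(𝔽₂)` acts transitively on nonzero vectors and on pairs of distinct nonzero
vectors (over `𝔽₂` these are exactly the linearly independent pairs). Averaging over the group
therefore computes the correlations `∑_A (-1)^(q(Ax) + q(Ay))` of a balanced `q`, and expanding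
the squares gives the Parseval-type identity
`(2^n - 1) ∑_{A ∈ GL_n} W(A)^2 + |GL_n| W(0)^2 = |GL_n| 4^n`.
With every `|W| = ω` it forces `ω^2 = 2^n`, which is impossible for odd `n`.
-/

open Finset

open Matrix

theorem MulAction.card_orbit_nsmul_sum_smul {G α M : Type*} [Group G] [Fintype G]
    [MulAction G α] [AddCommMonoid M] {x : α} {T : Finset α}
    (hT : ∀ y, y ∈ T ↔ ∃ g : G, g • x = y) (F : α → M) :
    #T • ∑ g : G, F (g • x) = Fintype.card G • ∑ y ∈ T, F y := by
  have hconst : ∀ y ∈ T, ∑ g : G, F (g • y) = ∑ g : G, F (g • x) := by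
    intro y hy
    obtain ⟨h, rfl⟩ := (hT y).mp hy
    simpa [mul_smul] using Equiv.sum_comp (Equiv.mulRight h) (fun g => F (g • x))
  have hmem : ∀ g : G, ∀ y ∈ T, g • y ∈ T := by
    intro g y hy
    obtain ⟨h, rfl⟩ := (hT y).mp hy
    exact (hT _).mpr ⟨g * h, mul_smul g h x⟩
  have hperm : ∀ g : G, ∑ y ∈ T, F (g • y) = ∑ y ∈ T, F y := fun g =>
    sum_nbij' (g • ·) (g⁻¹ • ·) (hmem g) (hmem g⁻¹) (fun y _ => inv_smul_smul g y)
      (fun y _ => smul_inv_smul g y) (fun _ _ => rfl)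
  calc #T • ∑ g : G, F (g • x) = ∑ y ∈ T, ∑ g : G, F (g • y) := by
        rw [sum_congr rfl hconst, sum_const]
    _ = ∑ g : G, ∑ y ∈ T, F (g • y) := sum_comm
    _ = Fintype.card G • ∑ y ∈ T, F y := by
        rw [sum_congr rfl fun g _ => hperm g, sum_const, card_univ]

theorem LinearIndependent.exists_linearEquiv_apply_eq {ι K V : Type*} [Field K] [AddCommGroup V]
    [Module K V] [FiniteDimensional K V] {x u : ι → V} (hx : LinearIndependent K x)
    (hu : LinearIndependent K u) : ∃ e : V ≃ₗ[K] V, ∀ i, e (x i) = u i := by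
  obtain ⟨e, he⟩ := Submodule.exists_linearEquiv_restrict_eq
    (hx.linearCombinationEquiv.symm ≪≫ₗ hu.linearCombinationEquiv)
  refine ⟨e, fun i => ?_⟩
  have hxi : x i ∈ Submodule.span K (Set.range x) := Submodule.subset_span ⟨i, rfl⟩
  have hrepr : hx.linearCombinationEquiv.symm ⟨x i, hxi⟩ = Finsupp.single i 1 :=
    hx.repr_eq_single i _ rfl
  rw [← he ⟨x i, hxi⟩, LinearEquiv.trans_apply, hrepr]
  simp

namespace Matrix.GeneralLinearGroup

variable {m K : Type*} [Field K] [Fintype m] [DecidableEq m]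

theorem exists_smul_eq_of_linearIndependent {ι : Type*} {x u : ι → m → K}
    (hx : LinearIndependent K x) (hu : LinearIndependent K u) :
    ∃ g : GL m K, ∀ i, g • x i = u i := by
  obtain ⟨e, he⟩ := hx.exists_linearEquiv_apply_eq hu
  refine ⟨toLin.symm (LinearMap.GeneralLinearGroup.ofLinearEquiv e), fun i => ?_⟩
  rw [← he i]
  have := congrArg (fun h : LinearMap.GeneralLinearGroup K (m → K) => h.val (x i))
    (toLin.apply_symm_apply (LinearMap.GeneralLinearGroup.ofLinearEquiv e))
  simp only [coe_toLin] at this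
  exact this

theorem exists_smul_eq_of_ne_zero {x u : m → K} (hx : x ≠ 0) (hu : u ≠ 0) :
    ∃ g : GL m K, g • x = u := by
  obtain ⟨g, hg⟩ := exists_smul_eq_of_linearIndependent (x := fun _ : Unit => x)
    (u := fun _ => u) (linearIndependent_unique_iff.mpr hx) (linearIndependent_unique_iff.mpr hu)
  exact ⟨g, hg ()⟩

end Matrix.GeneralLinearGroup

theorem linearIndependent_pair_zmod_two_iff {V : Type*} [AddCommGroup V] [Module (ZMod 2) V]
    {x y : V} : LinearIndependent (ZMod 2) ![x, y] ↔ x ≠ 0 ∧ y ≠ 0 ∧ x ≠ y := by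
  have hadd : ∀ v : V, v + v = 0 := fun v => by
    rw [← two_smul (ZMod 2), show (2 : ZMod 2) = 0 from rfl, zero_smul]
  have hcases : ∀ s : ZMod 2, s = 0 ∨ s = 1 := by decide
  rw [LinearIndependent.pair_iff]
  constructor
  · intro h
    refine ⟨fun hx => ?_, fun hy => ?_, fun hxy => ?_⟩
    · simpa using h 1 0 (by simp [hx])
    · simpa using h 0 1 (by simp [hy])
    · simpa using h 1 1 (by simp [hxy, hadd])
  · rintro ⟨hx, hy, hxy⟩ s t hst
    rcases hcases s with rfl | rfl <;> rcases hcases t with rfl | rfl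
    · simp
    · exact absurd (by simpa using hst) hy
    · exact absurd (by simpa using hst) hx
    · rw [one_smul, one_smul, add_eq_zero_iff_eq_neg, neg_eq_of_add_eq_zero_left (hadd y)] at hst
      exact absurd hst hxy

theorem Int.eq_floor_of_four_dvd {s : ℝ} {k : ℤ} (hk : 4 ∣ k) (hs : 4 ∣ ⌊s⌋)
    (h : |(k : ℝ) - s| ≤ 3) : k = ⌊s⌋ := by
  have hlo : ((⌊s⌋ - 3 : ℤ) : ℝ) ≤ k := by
    push_cast; linarith [Int.floor_le s, (abs_le.mp h).1]
  have hhi : (k : ℝ) < (⌊s⌋ + 4 : ℤ) := by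
    push_cast; linarith [Int.lt_floor_add_one s, (abs_le.mp h).2]
  have hlo' := Int.cast_le.mp hlo
  have hhi' := Int.cast_lt.mp hhi
  omega

theorem Int.sq_ne_two_pow_of_odd {n : ℕ} (hn : Odd n) (k : ℤ) : k ^ 2 ≠ 2 ^ n := by
  intro h
  have h2 : k.natAbs ^ 2 = 2 ^ n := by rw [← Int.natAbs_pow, h, Int.natAbs_pow]; rfl
  have h3 := congrArg (fun m => m.factorization 2) h2
  simp only [Nat.factorization_pow, Finsupp.smul_apply, smul_eq_mul,
    Nat.prime_two.factorization_self, mul_one] at h3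
  obtain ⟨j, rfl⟩ := hn
  omega

namespace BooleanFun

variable {n : ℕ}

def toSign {α : Type*} (h : α → ZMod 2) (a : α) : ℤ := (-1) ^ (h a).val

theorem toSign_add {α : Type*} (f g : α → ZMod 2) (a : α) :
    toSign (f + g) a = toSign f a * toSign g a := by
  have key : ∀ x y : ZMod 2, (-1 : ℤ) ^ (x + y).val = (-1) ^ x.val * (-1) ^ y.val := by decide
  exact key (f a) (g a)

theorem toSign_mul_self {α : Type*} (h : α → ZMod 2) (a : α) : toSign h a * toSign h a = 1 := by
  have key : ∀ x : ZMod 2, (-1 : ℤ) ^ x.val * (-1) ^ x.val = 1 := by decide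
  exact key (h a)

theorem wt_eq_sum_val (h : (Fin n → ZMod 2) → ZMod 2) : wt h = ∑ a, (h a).val := by
  rw [wt, card_filter]
  refine sum_congr rfl fun a _ => ?_
  generalize h a = x
  revert x; decide

theorem natCast_wt (h : (Fin n → ZMod 2) → ZMod 2) : (wt h : ZMod 2) = ∑ a, h a := by
  simp [wt_eq_sum_val]

theorem even_wt_add {f g : (Fin n → ZMod 2) → ZMod 2} (hf : Even (wt f)) (hg : Even (wt g)) :
    Even (wt (f + g)) := by
  rw [← ZMod.natCast_eq_zero_iff_even, natCast_wt] at hf hg ⊢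
  simp [sum_add_distrib, hf, hg]

theorem wt_comp_of_bijective (h : (Fin n → ZMod 2) → ZMod 2)
    {σ : (Fin n → ZMod 2) → Fin n → ZMod 2} (hσ : Function.Bijective σ) : wt (h ∘ σ) = wt h := by
  simp only [wt_eq_sum_val, Function.comp_apply]
  exact Fintype.sum_bijective σ hσ _ _ fun _ => rfl

theorem sum_toSign (h : (Fin n → ZMod 2) → ZMod 2) :
    ∑ a, toSign h a = 2 ^ n - 2 * (wt h : ℤ) := by
  have hval : ∀ c : ZMod 2, (-1 : ℤ) ^ c.val = 1 - 2 * c.val := by decide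
  simp [toSign, hval, sum_sub_distrib, ← mul_sum, wt_eq_sum_val]

theorem four_dvd_sum_toSign (hn : 2 ≤ n) {h : (Fin n → ZMod 2) → ZMod 2} (hh : Even (wt h)) :
    4 ∣ ∑ a, toSign h a := by
  obtain ⟨k, hk⟩ := hh
  rw [sum_toSign, hk]
  refine dvd_sub ?_ ⟨k, by push_cast; ring⟩
  exact (pow_dvd_pow 2 hn : (2 : ℤ) ^ 2 ∣ 2 ^ n)

theorem Wq_zero (q f : (Fin n → ZMod 2) → ZMod 2) : Wq q f 0 = ∑ a, toSign f a := if_pos rfl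

theorem Wq_of_isUnit [NeZero n] (q f : (Fin n → ZMod 2) → ZMod 2)
    {A : Matrix (Fin n) (Fin n) (ZMod 2)} (hA : IsUnit A) :
    Wq q f A = ∑ a, toSign (f + q ∘ A.vecMul) a :=
  if_neg hA.ne_zero

theorem four_dvd_Wq (hn : 2 ≤ n) {q f : (Fin n → ZMod 2) → ZMod 2} (hq : IsBalanced q)
    (hf : Even (wt f)) {A : Matrix (Fin n) (Fin n) (ZMod 2)} (hA : IsUnit A ∨ A = 0) :
    4 ∣ Wq q f A := by
  rcases hA with hA | rfl
  · have : NeZero n := ⟨by omega⟩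
    rw [Wq_of_isUnit q f hA]
    refine four_dvd_sum_toSign hn (even_wt_add hf ?_)
    rw [wt_comp_of_bijective q ⟨vecMul_injective_iff_isUnit.mpr hA,
      vecMul_surjective_iff_isUnit.mpr hA⟩, hq]
    exact (Nat.even_pow' (by omega)).mpr even_two
  · rw [Wq_zero]
    exact four_dvd_sum_toSign hn hf

theorem natCast_card_erase_zero :
    ((univ.erase (0 : Fin n → ZMod 2)).card : ℤ) = 2 ^ n - 1 := by
  simp [card_erase_of_mem, Nat.cast_sub Nat.one_le_two_pow]

variable (q : (Fin n → ZMod 2) → ZMod 2)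

theorem sum_erase_zero_toSign (hn : 1 ≤ n) (hq : IsBalanced q) :
    ∑ y ∈ univ.erase 0, toSign q y = -toSign q 0 := by
  have hsum : ∑ a, toSign q a = 0 := by
    rw [sum_toSign, hq, ← Nat.sub_add_cancel hn]
    push_cast
    ring
  rw [← add_eq_zero_iff_eq_neg, sum_erase_add _ _ (mem_univ 0), hsum]

theorem sum_offDiag_toSign_mul (hn : 1 ≤ n) (hq : IsBalanced q) :
    ∑ p ∈ (univ.erase (0 : Fin n → ZMod 2)).offDiag, toSign q p.1 * toSign q p.2
      = 2 - 2 ^ n := by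
  have hsplit := sum_union (disjoint_diag_offDiag (univ.erase (0 : Fin n → ZMod 2)))
    (f := fun p => toSign q p.1 * toSign q p.2)
  rw [diag_union_offDiag, sum_product, ← sum_mul_sum, sum_erase_zero_toSign q hn hq, neg_mul_neg,
    toSign_mul_self, sum_diag] at hsplit
  simp only [toSign_mul_self, sum_const, nsmul_one] at hsplit
  linarith [natCast_card_erase_zero (n := n)]

theorem sum_toSign_smul (hq : IsBalanced q) {x : Fin n → ZMod 2} (hx : x ≠ 0) :
    ((2 : ℤ) ^ n - 1) * ∑ g : GL (Fin n) (ZMod 2), toSign q (g • x)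
      = -(Fintype.card (GL (Fin n) (ZMod 2)) * toSign q 0) := by
  have hT : ∀ y, y ∈ univ.erase 0 ↔ ∃ g : GL (Fin n) (ZMod 2), g • x = y := fun y => by
    rw [mem_erase, and_iff_left (mem_univ y)]
    exact ⟨GeneralLinearGroup.exists_smul_eq_of_ne_zero hx,
      fun ⟨g, hg⟩ => hg ▸ (smul_ne_zero_iff_ne g).mpr hx⟩
  have hn : 1 ≤ n := (Function.ne_iff.mp hx).choose.pos
  have := MulAction.card_orbit_nsmul_sum_smul hT (toSign q)
  rwa [nsmul_eq_mul, nsmul_eq_mul, sum_erase_zero_toSign q hn hq, natCast_card_erase_zero,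
    mul_neg] at this

theorem sum_toSign_smul_mul_of_ne (hn : 2 ≤ n) (hq : IsBalanced q) {x y : Fin n → ZMod 2}
    (hx : x ≠ 0) (hy : y ≠ 0) (hxy : x ≠ y) :
    ((2 : ℤ) ^ n - 1) * ∑ g : GL (Fin n) (ZMod 2), toSign q (g • x) * toSign q (g • y)
      = -Fintype.card (GL (Fin n) (ZMod 2)) := by
  have hT : ∀ p, p ∈ (univ.erase 0).offDiag ↔ ∃ g : GL (Fin n) (ZMod 2), g • (x, y) = p := by
    rintro ⟨u, v⟩
    simp only [mem_offDiag, mem_erase, mem_univ, and_true, Prod.smul_mk, Prod.mk.injEq]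
    constructor
    · rintro ⟨hu, hv, huv⟩
      obtain ⟨g, hg⟩ := GeneralLinearGroup.exists_smul_eq_of_linearIndependent
        (linearIndependent_pair_zmod_two_iff.mpr ⟨hx, hy, hxy⟩)
        (linearIndependent_pair_zmod_two_iff.mpr ⟨hu, hv, huv⟩)
      exact ⟨g, hg 0, hg 1⟩
    · rintro ⟨g, rfl, rfl⟩
      exact ⟨(smul_ne_zero_iff_ne g).mpr hx, (smul_ne_zero_iff_ne g).mpr hy,
        fun h => hxy (smul_left_cancel g h)⟩
  have := MulAction.card_orbit_nsmul_sum_smul hT (fun p => toSign q p.1 * toSign q p.2)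
  rw [nsmul_eq_mul, nsmul_eq_mul, sum_offDiag_toSign_mul q (by omega) hq, offDiag_card,
    Nat.cast_sub (Nat.le_mul_self _), Nat.cast_mul, natCast_card_erase_zero] at this
  simp only [Prod.smul_fst, Prod.smul_snd] at this
  have hm : (2 : ℤ) ^ n - 2 ≠ 0 := by
    have : (2 : ℤ) ^ 2 ≤ 2 ^ n := pow_le_pow_right₀ (by norm_num) hn
    linarith
  refine mul_left_cancel₀ hm ?_
  linear_combination this

theorem sum_toSign_smul_mul (hn : 2 ≤ n) (hq : IsBalanced q) (x y : Fin n → ZMod 2) :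
    ((2 : ℤ) ^ n - 1) * ∑ g : GL (Fin n) (ZMod 2), toSign q (g • x) * toSign q (g • y)
      = Fintype.card (GL (Fin n) (ZMod 2)) * (2 ^ n * (if x = y then 1 else 0) - 1) := by
  by_cases hxy : x = y
  · subst hxy
    simp only [toSign_mul_self, sum_const, card_univ, nsmul_one, if_true]
    ring
  rw [if_neg hxy]
  by_cases hx : x = 0
  · subst hx
    simp only [smul_zero, ← mul_sum]
    linear_combination toSign q 0 * sum_toSign_smul q hq (Ne.symm hxy)
      - (Fintype.card (GL (Fin n) (ZMod 2)) : ℤ) * toSign_mul_self q 0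
  by_cases hy : y = 0
  · subst hy
    simp only [smul_zero, ← sum_mul]
    linear_combination toSign q 0 * sum_toSign_smul q hq hx
      - (Fintype.card (GL (Fin n) (ZMod 2)) : ℤ) * toSign_mul_self q 0
  rw [sum_toSign_smul_mul_of_ne q hn hq hx hy hxy]
  ring

-- `GL` acts on the left (`g • x = g *ᵥ x`) while `Wq` uses `a ᵥ* A`, hence the transpose.
theorem Wq_transpose [NeZero n] (f : (Fin n → ZMod 2) → ZMod 2) (g : GL (Fin n) (ZMod 2)) :
    Wq q f (g : Matrix (Fin n) (Fin n) (ZMod 2))ᵀ = ∑ x, toSign f x * toSign q (g • x) := by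
  rw [Wq_of_isUnit q f ((isUnit_transpose _).mpr g.isUnit)]
  refine sum_congr rfl fun x _ => ?_
  rw [toSign_add]
  show toSign f x * toSign q (x ᵥ* (g : Matrix _ _ _)ᵀ) = _
  rw [vecMul_transpose]
  rfl

theorem sum_sq_Wq_transpose [NeZero n] (f : (Fin n → ZMod 2) → ZMod 2) :
    ∑ g : GL (Fin n) (ZMod 2), Wq q f (g : Matrix _ _ _)ᵀ ^ 2
      = ∑ x, ∑ y, toSign f x * toSign f y *
          ∑ g : GL (Fin n) (ZMod 2), toSign q (g • x) * toSign q (g • y) := by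
  have hexp : ∀ g : GL (Fin n) (ZMod 2), Wq q f (g : Matrix _ _ _)ᵀ ^ 2
      = ∑ x, ∑ y, toSign f x * toSign f y * (toSign q (g • x) * toSign q (g • y)) := fun g => by
    rw [Wq_transpose, sq, sum_mul_sum]
    exact sum_congr rfl fun x _ => sum_congr rfl fun y _ => by ring
  rw [sum_congr rfl fun g _ => hexp g, sum_comm]
  refine sum_congr rfl fun x _ => ?_
  rw [sum_comm]
  exact sum_congr rfl fun y _ => (mul_sum _ _ _).symm

theorem Wq_parseval (hn : 2 ≤ n) (hq : IsBalanced q) (f : (Fin n → ZMod 2) → ZMod 2) :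
    ((2 : ℤ) ^ n - 1) * ∑ g : GL (Fin n) (ZMod 2), Wq q f (g : Matrix _ _ _)ᵀ ^ 2
      + Fintype.card (GL (Fin n) (ZMod 2)) * Wq q f 0 ^ 2
      = Fintype.card (GL (Fin n) (ZMod 2)) * (2 ^ n) ^ 2 := by
  have : NeZero n := ⟨by omega⟩
  set c : ℤ := (Fintype.card (GL (Fin n) (ZMod 2)) : ℤ) with hc
  set F := toSign f
  have hdiag : ∀ x y, F x * F y * (c * (2 ^ n * (if x = y then 1 else 0) - 1))
      = c * 2 ^ n * (if x = y then 1 else 0) - c * (F x * F y) := fun x y => by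
    split_ifs with h
    · rw [h, toSign_mul_self]; ring
    · ring
  calc ((2 : ℤ) ^ n - 1) * ∑ g : GL (Fin n) (ZMod 2), Wq q f (g : Matrix _ _ _)ᵀ ^ 2
        + c * Wq q f 0 ^ 2
      = ∑ x, ∑ y, F x * F y * (((2 : ℤ) ^ n - 1) *
          ∑ g : GL (Fin n) (ZMod 2), toSign q (g • x) * toSign q (g • y))
          + c * (∑ x, F x) ^ 2 := by
        rw [sum_sq_Wq_transpose, Wq_zero, mul_sum]
        congr 1
        refine sum_congr rfl fun x _ => ?_
        rw [mul_sum]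
        exact sum_congr rfl fun y _ => by ring
    _ = ∑ x, ∑ y, (c * 2 ^ n * (if x = y then 1 else 0) - c * (F x * F y))
          + c * (∑ x, F x) ^ 2 := by
        simp only [sum_toSign_smul_mul q hn hq, ← hc, hdiag]
    _ = c * (2 ^ n) ^ 2 := by
        simp only [sum_sub_distrib, ← mul_sum, sum_ite_eq, mem_univ, if_true, sum_const,
          card_univ, nsmul_one, sq, sum_mul_sum, Fintype.card_fun, ZMod.card, Fintype.card_fin]
        push_cast
        ring

end BooleanFun

/-- Let `n ≥ 3` be odd, `ω = ⌊2^(n/2)⌋` with `ω ≡ 0 (mod 4)`, and `q` balanced. Then no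
`f` with even weight is `3`-almost `q`-bent (here `2^(n/2)` is the real number `√(2^n)`). -/
theorem stmt_19 (n : ℕ) (hn3 : 3 ≤ n) (hnodd : Odd n)
    (q : (Fin n → ZMod 2) → ZMod 2) (hq : IsBalanced q)
    (ω : ℤ) (hω : ω = ⌊Real.sqrt (2 ^ n)⌋) (hω4 : ω % 4 = 0)
    (f : (Fin n → ZMod 2) → ZMod 2) (hf : Even (wt f)) :
    ¬ (∀ A : Matrix (Fin n) (Fin n) (ZMod 2), (IsUnit A ∨ A = 0) →
        |(|Wq q f A| : ℝ) - Real.sqrt (2 ^ n)| ≤ 3) := by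
  intro H
  have hsq : ∀ A, (IsUnit A ∨ A = 0) → Wq q f A ^ 2 = ω ^ 2 := fun A hA => by
    have h4 : 4 ∣ |Wq q f A| := (dvd_abs _ _).mpr (BooleanFun.four_dvd_Wq (by omega) hq hf hA)
    rw [← sq_abs, hω, Int.eq_floor_of_four_dvd h4 (hω ▸ Int.dvd_of_emod_eq_zero hω4)
      (by exact_mod_cast H A hA)]
  have hparseval := BooleanFun.Wq_parseval q (by omega) hq f
  rw [sum_congr rfl fun g _ => hsq _ (Or.inl ((isUnit_transpose _).mpr g.isUnit)),
    hsq 0 (Or.inr rfl), sum_const, card_univ, nsmul_eq_mul] at hparseval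
  have hc : (0 : ℤ) < Fintype.card (GL (Fin n) (ZMod 2)) := by exact_mod_cast Fintype.card_pos
  have hm : (0 : ℤ) < 2 ^ n := by positivity
  refine Int.sq_ne_two_pow_of_odd hnodd ω (mul_left_cancel₀ (mul_pos hc hm).ne' ?_)
  linear_combination hparseval
end
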